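/- There exists a 2-iterated pushdown automaton with input alphabet {r, s, b, w} that accepts a word u if and only if u = r · s^k · φ(σ^k(B)) · s^k for some integer k ≥ 1; these are exactly the contour words of the truncated black sectors of the pentagrid and of the heptagrid (root read as r, the nodes of the leftmost and rightmost branches below the root read as s, and the bottom level read as the level word of the Fibonacci tree rooted at a black node). -/

import Mathlib

/-- Operations on a 2-level iterated pushdown store. -/
inductive Op (Γ : Type*) where
  | pop1 : Op Γ
  | pop2 : Op Γ
  | push1 : List Γ → Op Γ
  | push2 : List Γ → Op Γ

/-- A 2-level pushdown store: a finite list of entries `(A, s)` with `A` a letter of `Γ`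
and `s ∈ Γ*` the inner store of the entry. -/
abbrev Store (Γ : Type*) := List (Γ × List Γ)

/-- The top symbols of a 2-level store: the letter of the top entry followed by the first
letter of its inner store when that inner store is nonempty; an element of `Γ ∪ Γ²`. -/
def topsym {Γ : Type*} : Store Γ → List Γ
  | [] => []
  | (A, s) :: _ => A :: s.take 1

/-- Apply an operation to a 2-level store (a partial operation):
`pop1` removes the top entry; `pop2` removes the first letter of the inner store of the
top entry (when nonempty); `push1 w` replaces the top entry `(A, s)` by the entries
`(w_1, s), …, (w_m, s)`; `push2 u` replaces the top entry `(A, s)` by `(A, u ++ s)`. -/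
def applyOp {Γ : Type*} : Op Γ → Store Γ → Option (Store Γ)
  | .pop1, _ :: rest => some rest
  | .pop2, (A, _ :: s) :: rest => some ((A, s) :: rest)
  | .push1 w, (_, s) :: rest => some (w.map (fun x => (x, s)) ++ rest)
  | .push2 u, (A, s) :: rest => some ((A, u ++ s) :: rest)
  | _, _ => none

/-- A 2-iterated pushdown automaton with state set `Q`, input alphabet `In` and store
alphabet `Γ`: an initial state `q0`, an initial store symbol `Z`, and a transition table
`δ` assigning to each triple `(q, a, t)` — with `a ∈ In ∪ {ε}` and `t ∈ Γ ∪ Γ²` — a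
finite set (list) of instructions `(q', op)`. -/
structure IPDA2 (Q In Γ : Type*) where
  q0 : Q
  Z : Γ
  δ : Q → Option In → List Γ → List (Q × Op Γ)

/-- A configuration: current state, remaining input word, current 2-level store. -/
abbrev Config (Q In Γ : Type*) := Q × List In × Store Γ

/-- One computation step: an instruction from `δ(q, a, topsym ω)` may be applied, where
`a = ε` (no input consumed) or `a` is the first letter of the remaining input (which is
then consumed); the state changes to `q'` and the operation is applied to the store. -/
inductive IPDA2.Step {Q In Γ : Type*} (M : IPDA2 Q In Γ) :
    Config Q In Γ → Config Q In Γ → Prop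
  | eps {q q' : Q} {w : List In} {ω ω' : Store Γ} {op : Op Γ} :
      (q', op) ∈ M.δ q none (topsym ω) → applyOp op ω = some ω' →
      M.Step (q, w, ω) (q', w, ω')
  | read {q q' : Q} {a : In} {w : List In} {ω ω' : Store Γ} {op : Op Γ} :
      (q', op) ∈ M.δ q (some a) (topsym ω) → applyOp op ω = some ω' →
      M.Step (q, a :: w, ω) (q', w, ω')

/-- A finite sequence of computation steps. -/
def IPDA2.Steps {Q In Γ : Type*} (M : IPDA2 Q In Γ) :
    Config Q In Γ → Config Q In Γ → Prop :=
  Relation.ReflTransGen M.Step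

/-- Acceptance: some finite sequence of steps leads from the initial configuration
`(q0, w, [(Z, ε)])` to a configuration with empty remaining input and empty store. -/
def IPDA2.Accepts {Q In Γ : Type*} (M : IPDA2 Q In Γ) (w : List In) : Prop :=
  ∃ q : Q, M.Steps (M.q0, w, [(M.Z, [])]) (q, [], [])

/-- The two-letter alphabet `{B, W}` of node labels. -/
inductive BW where
  | B : BW
  | W : BW
  deriving DecidableEq

/-- The substitution `σ` determined by `σ(B) = BW` and `σ(W) = BWW`, on letters. -/
def sigmaLetter : BW → List BW
  | .B => [.B, .W]
  | .W => [.B, .W, .W]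

/-- The substitution `σ` extended to words (monoid morphism of words). -/
def sigmaWord (w : List BW) : List BW := w.flatMap sigmaLetter

/-- The two-letter input alphabet `{b, w}`. -/
inductive bw where
  | b : bw
  | w : bw
  deriving DecidableEq

/-- The letter renaming `φ : B ↦ b, W ↦ w`. -/
def phi : BW → bw
  | .B => .b
  | .W => .w

/-- The four-letter input alphabet `{r, s, b, w}`. -/
inductive rsbw where
  | r : rsbw
  | s : rsbw
  | b : rsbw
  | w : rsbw
  deriving DecidableEq

/-- The letter renaming `φ : B ↦ b, W ↦ w` into the alphabet `{r, s, b, w}`. -/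
def phi' : BW → rsbw
  | .B => .b
  | .W => .w

/-!
The automaton counts the first block `s^k` as the inner store `C^k` of `Z`, then replaces `Z`
by the two entries `(B, C^k), (Z, C^k)`. An entry `(x, C^n)` with `x ∈ {B, W}` stands for the
word `φ(σ^n(x))`: while `n > 0` it is expanded by one `pop2` followed by `push1 σ(x)`, which
gives every letter of `σ(x)` the inner store `C^(n-1)`, since `σ^n(x) = σ^(n-1)(σ(x))`; with
`n = 0` the letter itself is read. The entry `(Z, C^k)` then reads the last block `s^k`.
Conversely, every configuration from which acceptance is reachable satisfies `Admissible`; in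
the reading phase this says that the remaining input is exactly the word spelled by the store.
-/

theorem sigmaWord_append (u v : List BW) : sigmaWord (u ++ v) = sigmaWord u ++ sigmaWord v :=
  List.flatMap_append ..

theorem sigmaWord_iterate_append (n : ℕ) (u v : List BW) :
    sigmaWord^[n] (u ++ v) = sigmaWord^[n] u ++ sigmaWord^[n] v := by
  induction n generalizing u v with
  | zero => rfl
  | succ n ih => simp only [Function.iterate_succ_apply, sigmaWord_append, ih]

theorem sigmaWord_iterate_eq_flatMap (n : ℕ) (w : List BW) :
    sigmaWord^[n] w = w.flatMap fun x => sigmaWord^[n] [x] := by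
  induction w with
  | nil => exact Function.iterate_fixed rfl n
  | cons x w ih => rw [← List.singleton_append, sigmaWord_iterate_append, ih]; rfl

theorem sigmaWord_iterate_succ_singleton (n : ℕ) (x : BW) :
    sigmaWord^[n + 1] [x] = (sigmaLetter x).flatMap fun y => sigmaWord^[n] [y] := by
  rw [Function.iterate_succ_apply, sigmaWord_iterate_eq_flatMap]
  simp [sigmaWord]

theorem IPDA2.Steps.backward_invariant {Q In Γ : Type*} {M : IPDA2 Q In Γ}
    {P : Config Q In Γ → Prop} {c c' : Config Q In Γ} (h : M.Steps c c')
    (hP : ∀ {d d'}, M.Step d d' → P d' → P d) (hc' : P c') : P c :=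
  Relation.ReflTransGen.head_induction_on h hc' fun hs _ ih => hP hs ih

namespace BlackSector

inductive State where
  | start | counting | reading | substituting
  deriving DecidableEq

instance : Fintype State :=
  ⟨{.start, .counting, .reading, .substituting}, fun q => by cases q <;> simp⟩

inductive StackSym where
  | Z | C
  | node : BW → StackSym
  deriving DecidableEq

instance : Fintype StackSym :=
  ⟨{.Z, .C, .node .B, .node .W}, fun A => by rcases A with _ | _ | _ | _ <;> simp⟩

open State StackSym

def δ : State → Option rsbw → List StackSym → List (State × Op StackSym)
  | start, some .r, [Z] => [(counting, .push2 [])]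
  | counting, some .s, Z :: _ => [(counting, .push2 [C])]
  | counting, none, [Z, C] => [(reading, .push1 [node .B, Z])] -- the `C` forces `k ≥ 1`
  | reading, none, [node _, C] => [(substituting, .pop2)]
  | substituting, none, node x :: _ => [(reading, .push1 ((sigmaLetter x).map node))]
  | reading, some .b, [node .B] => [(reading, .pop1)]
  | reading, some .w, [node .W] => [(reading, .pop1)]
  | reading, some .s, [Z, C] => [(reading, .pop2)]
  | reading, none, [Z] => [(reading, .pop1)]
  | _, _, _ => []

def M : IPDA2 State rsbw StackSym := ⟨start, Z, δ⟩

def entryWord : StackSym → ℕ → List rsbw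
  | node x, n => (sigmaWord^[n] [x]).map phi'
  | Z, n => List.replicate n .s
  | C, _ => []

def storeWord (ω : Store StackSym) : List rsbw := ω.flatMap fun e => entryWord e.1 e.2.length

def contour (k : ℕ) : List rsbw :=
  rsbw.r :: (List.replicate k .s ++ entryWord (node .B) k ++ entryWord Z k)

@[simp] theorem entryWord_Z (n : ℕ) : entryWord Z n = List.replicate n .s := rfl

@[simp] theorem entryWord_node_zero (x : BW) : entryWord (node x) 0 = [phi' x] := rfl

@[simp] theorem storeWord_nil : storeWord [] = [] := rfl

@[simp] theorem storeWord_cons (A : StackSym) (s : List StackSym) (ω : Store StackSym) :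
    storeWord ((A, s) :: ω) = entryWord A s.length ++ storeWord ω := rfl

@[simp] theorem storeWord_append (ω ω' : Store StackSym) :
    storeWord (ω ++ ω') = storeWord ω ++ storeWord ω' := List.flatMap_append ..

@[simp] theorem storeWord_map_sigmaLetter (x : BW) (s : List StackSym) :
    storeWord ((sigmaLetter x).map fun y => (node y, s)) = entryWord (node x) (s.length + 1) := by
  simp [storeWord, entryWord, sigmaWord_iterate_succ_singleton, List.map_flatMap,
    List.flatMap_map]

def Admissible : Config State rsbw StackSym → Prop
  | (start, u, ω) => ω = [(Z, [])] → ∃ k, 1 ≤ k ∧ u = contour k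
  | (counting, u, ω) => ∀ s, ω = [(Z, s)] → ∃ m, 1 ≤ s.length + m ∧
      u = List.replicate m .s ++ entryWord (node .B) (s.length + m) ++ entryWord Z (s.length + m)
  | (reading, u, ω) => u = storeWord ω
  -- a `pop2` has just taken a `C` from the top entry, whose letter is not yet substituted
  | (substituting, u, []) => u = []
  | (substituting, u, (A, s) :: ω) => u = storeWord ((A, C :: s) :: ω)

theorem admissible_start {u : List rsbw} {rest : Store StackSym}
    (h : Admissible (counting, u, (Z, []) :: rest)) :
    Admissible (start, .r :: u, (Z, []) :: rest) := by
  rintro ⟨⟩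
  obtain ⟨m, hm, rfl⟩ := h [] rfl
  exact ⟨m, by simpa using hm, by simp [contour]⟩

theorem admissible_counting_of_push {u : List rsbw} {s : List StackSym} {rest : Store StackSym}
    (h : Admissible (counting, u, (Z, C :: s) :: rest)) :
    Admissible (counting, .s :: u, (Z, s) :: rest) := by
  rintro _ ⟨⟩
  obtain ⟨m, -, rfl⟩ := h (C :: s) rfl
  refine ⟨m + 1, by omega, ?_⟩
  rw [show s.length + (m + 1) = (C :: s).length + m by simp; omega]
  simp [List.replicate_succ]

theorem admissible_counting_of_reading {u : List rsbw} {s : List StackSym}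
    {rest : Store StackSym}
    (h : Admissible (reading, u, (node .B, C :: s) :: (Z, C :: s) :: rest)) :
    Admissible (counting, u, (Z, C :: s) :: rest) := by
  rintro _ ⟨⟩
  exact ⟨0, by simp, by simpa [Admissible] using h⟩

theorem admissible_of_step {c c' : Config State rsbw StackSym} (h : M.Step c c')
    (h' : Admissible c') : Admissible c := by
  obtain ⟨q, u, ω⟩ := c
  cases h with
  -- split until the state, the input letter and `topsym ω` are constructors, so that `δ` computes
  | eps hmem happ =>
    rcases ω with _ | ⟨⟨_ | _ | ⟨_ | _⟩, _ | ⟨_ | _ | _, _⟩⟩, rest⟩ <;> cases q <;>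
      simp [M, δ, topsym] at hmem
    all_goals obtain ⟨rfl, rfl⟩ := hmem
    all_goals simp only [applyOp, Option.some.injEq] at happ
    all_goals subst happ
    all_goals first
      | exact admissible_counting_of_reading h'
      | simpa [Admissible, Function.comp_def] using h'
  | @read _ _ a _ _ _ _ hmem happ =>
    rcases ω with _ | ⟨⟨_ | _ | ⟨_ | _⟩, _ | ⟨_ | _ | _, _⟩⟩, rest⟩ <;> cases q <;>
      cases a <;> simp [M, δ, topsym] at hmem
    all_goals obtain ⟨rfl, rfl⟩ := hmem
    all_goals simp only [applyOp, Option.some.injEq] at happ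
    all_goals subst happ
    all_goals first
      | exact admissible_start h'
      | exact admissible_counting_of_push h'
      | simpa [Admissible, List.replicate_succ, phi'] using h'

theorem admissible_of_accepting_steps {c : Config State rsbw StackSym} {q : State}
    (h : M.Steps c (q, [], [])) : Admissible c :=
  h.backward_invariant admissible_of_step (by cases q <;> simp [Admissible])

theorem steps_counting (m : ℕ) (s : List StackSym) (u : List rsbw) :
    M.Steps (counting, List.replicate m .s ++ u, [(Z, s)])
      (counting, u, [(Z, List.replicate m C ++ s)]) := by
  induction m generalizing s with
  | zero => exact .refl
  | succ m ih =>
    refine .head (.read (q' := counting) (op := .push2 [C]) (by simp [M, δ, topsym]) rfl) ?_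
    rw [List.replicate_succ', List.append_assoc]
    exact ih (C :: s)

def Consumable (e : StackSym × List StackSym) : Prop :=
  ∀ u rest, M.Steps (reading, entryWord e.1 e.2.length ++ u, e :: rest) (reading, u, rest)

theorem steps_reading_of_consumable {ω : Store StackSym} (h : ∀ e ∈ ω, Consumable e)
    (u : List rsbw) (rest : Store StackSym) :
    M.Steps (reading, storeWord ω ++ u, ω ++ rest) (reading, u, rest) := by
  induction ω with
  | nil => exact .refl
  | cons e ω ih =>
    simp only [List.forall_mem_cons] at h
    rw [storeWord, List.flatMap_cons, List.append_assoc]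
    exact (h.1 _ _).trans (ih h.2)

theorem consumable_Z (n : ℕ) : Consumable (Z, List.replicate n C) := by
  intro u rest
  induction n with
  | zero => exact .single (.eps (op := .pop1) (by simp [M, δ, topsym]) rfl)
  | succ n ih =>
    exact .head (.read (op := .pop2) (by simp [M, δ, topsym, List.replicate_succ]) rfl) ih

theorem consumable_node (x : BW) (n : ℕ) : Consumable (node x, List.replicate n C) := by
  induction n generalizing x with
  | zero =>
    intro u rest
    cases x <;> exact .single (.read (op := .pop1) (by simp [M, δ, topsym, phi']) rfl)
  | succ n ih =>
    intro u rest
    refine .head (.eps (q' := substituting) (op := .pop2)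
      (by simp [M, δ, topsym, List.replicate_succ]) rfl) ?_
    refine .head (.eps (q' := reading) (op := .push1 ((sigmaLetter x).map node))
      (by simp [M, δ, topsym]) rfl) ?_
    have := steps_reading_of_consumable
      (ω := (sigmaLetter x).map fun y => (node y, List.replicate n C))
      (by simpa using fun y _ => ih y) u rest
    rw [storeWord_map_sigmaLetter, List.length_replicate] at this
    show M.Steps _ _
    simpa [Function.comp_def] using this

theorem accepts_contour {k : ℕ} (hk : 1 ≤ k) : M.Accepts (contour k) := by
  obtain ⟨n, rfl⟩ := Nat.exists_eq_add_of_le' hk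
  refine ⟨reading, .head (.read (q' := counting) (op := .push2 [])
    (by simp [M, δ, topsym]) rfl) ?_⟩
  refine .trans (List.append_assoc .. ▸ steps_counting (n + 1) [] _) ?_
  refine .head (.eps (q' := reading) (op := .push1 [node .B, Z])
    (by simp [M, δ, topsym, List.replicate_succ]) rfl) ?_
  show M.Steps _ _
  simpa using steps_reading_of_consumable
    (ω := [(node .B, List.replicate (n + 1) C), (Z, List.replicate (n + 1) C)])
    (by simp [consumable_node, consumable_Z]) [] []

end BlackSector

/-- There exists a 2-iterated pushdown automaton with input alphabet `{r, s, b, w}` that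
accepts a word `u` if and only if `u = r · s^k · φ(σ^k(B)) · s^k` for some integer
`k ≥ 1` — exactly the contour words of the truncated black sectors of the pentagrid and
of the heptagrid (root read as `r`, the nodes of the leftmost and rightmost branches
below the root read as `s`, the bottom level read as the level word of the Fibonacci
tree rooted at a black node). -/
theorem exists_ipda2_black_sector_contours :
    ∃ (Q Γ : Type) (_ : Fintype Q) (_ : Fintype Γ) (M : IPDA2 Q rsbw Γ),
      ∀ u : List rsbw,
        M.Accepts u ↔
          ∃ k : ℕ, 1 ≤ k ∧
            u = rsbw.r :: (List.replicate k rsbw.s ++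
                  (sigmaWord^[k] [BW.B]).map phi' ++ List.replicate k rsbw.s) := by
  refine ⟨BlackSector.State, BlackSector.StackSym, inferInstance, inferInstance, BlackSector.M,
    fun u => ⟨fun ⟨_, h⟩ => BlackSector.admissible_of_accepting_steps h rfl, ?_⟩⟩
  rintro ⟨k, hk, rfl⟩
  exact BlackSector.accepts_contour hk
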